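/- arXiv:1511.02913 — 2 statements merged into one kernel-verified Lean document; each statement's English description precedes it below -/
import Mathlib

section
/- Let G be a strongly connected digraph with start vertex s, and let u be a strong articulation point that is a common nontrivial dominator of G_s and G_s^R. Then the subgraph of G\u induced by C = V \ (D(u) ∪ D^R(u)) is a strongly connected component of G\u. -/
namespace StrongConn

variable {V : Type*}

/-- `p` is a walk in the digraph `G` from `u` to `v`, recorded as the list of visited vertices. -/
def IsWalk (G : V → V → Prop) (u v : V) (p : List V) : Prop :=
  p.Chain' G ∧ p.head? = some u ∧ p.getLast? = some v

/-- The directed edge `(a,b)` occurs on the walk `p`. -/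
def EdgeOn (a b : V) (p : List V) : Prop := (a, b) ∈ p.zip p.tail

/-- `v` is reachable from `u` in `G`. -/
def Reach (G : V → V → Prop) (u v : V) : Prop := ∃ p, IsWalk G u v p

/-- `u` and `v` are strongly connected in `G`. -/
def SConn (G : V → V → Prop) (u v : V) : Prop := Reach G u v ∧ Reach G v u

def StronglyConnected (G : V → V → Prop) : Prop := ∀ u v, Reach G u v

/-- `G` with the edge `(a,b)` deleted. -/
def DelEdge (G : V → V → Prop) (a b : V) : V → V → Prop :=
  fun x y => G x y ∧ ¬(x = a ∧ y = b)

/-- `G` with the vertex `u` (and all incident edges) deleted. -/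
def DelVertex (G : V → V → Prop) (u : V) : V → V → Prop :=
  fun x y => G x y ∧ x ≠ u ∧ y ≠ u

/-- `C` is a strongly connected component of `G`. -/
def IsSCC (G : V → V → Prop) (C : Set V) : Prop :=
  C.Nonempty ∧ (∀ x ∈ C, ∀ y ∈ C, SConn G x y) ∧ ∀ x ∈ C, ∀ y, SConn G x y → y ∈ C

/-- `(a,b)` is a strong bridge: an edge whose removal increases the number of
strongly connected components, i.e. it separates some strongly connected pair. -/
def IsStrongBridge (G : V → V → Prop) (a b : V) : Prop :=
  G a b ∧ ∃ x y, SConn G x y ∧ ¬ SConn (DelEdge G a b) x y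

/-- `u` is a strong articulation point: removing it increases the number of strongly
connected components, i.e. it separates some strongly connected pair of other vertices. -/
def IsStrongArticulationPoint (G : V → V → Prop) (u : V) : Prop :=
  ∃ x y, x ≠ u ∧ y ≠ u ∧ SConn G x y ∧ ¬ SConn (DelVertex G u) x y

/-- The reverse digraph. -/
def Rev (G : V → V → Prop) : V → V → Prop := fun x y => G y x

/-- `u` dominates `v` in the flow graph `G_s`; equivalently, `u` is an ancestor of `v`
(and `v` a descendant of `u`) in the dominator tree of `G_s`. -/
def Dom (G : V → V → Prop) (s u v : V) : Prop :=
  ∀ p, IsWalk G s v p → u ∈ p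

/-- `u` is the immediate dominator of `v` in `G_s` (the parent of `v` in the dominator tree). -/
def Idom (G : V → V → Prop) (s u v : V) : Prop :=
  u ≠ v ∧ Dom G s u v ∧ ∀ w, w ≠ v → Dom G s w v → Dom G s w u

/-- Edge `(a,b)` is a bridge of the flow graph `G_s`: every walk from `s` to `b` uses it. -/
def IsBridge (G : V → V → Prop) (s a b : V) : Prop :=
  G a b ∧ ∀ p, IsWalk G s b p → EdgeOn a b p

/-- `r` is the head of some bridge of `G_s`, i.e. a non-`s` root in the bridge
decomposition of the dominator tree. -/
def IsBridgeHead (G : V → V → Prop) (s r : V) : Prop :=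
  ∃ a, IsBridge G s a r

/-- `r` is the root of the tree containing `x` in the bridge decomposition of the
dominator tree of `G_s`: `r` dominates `x`, `r` is `s` or a bridge head, and every
bridge head dominating `x` dominates `r`. -/
def IsBDRoot (G : V → V → Prop) (s r x : V) : Prop :=
  Dom G s r x ∧ (r = s ∨ IsBridgeHead G s r) ∧
    ∀ z, Dom G s z x → IsBridgeHead G s z → Dom G s z r

/-- A depth-first search tree of `G` rooted at `s`, given by a parent function and a
preorder numbering. -/
structure DFSTree (G : V → V → Prop) (s : V) where
  parent : V → V
  pre : V → ℕ
  parent_root : parent s = s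
  parent_edge : ∀ v, v ≠ s → G (parent v) v
  root_reach : ∀ v, ∃ n, parent^[n] v = s
  pre_inj : Function.Injective pre
  pre_parent : ∀ v, v ≠ s → pre (parent v) < pre v
  /-- Descendants of a vertex form a contiguous interval in preorder. -/
  interval : ∀ u v w, (∃ n, parent^[n] w = u) → pre u ≤ pre v → pre v ≤ pre w →
      ∃ n, parent^[n] v = u
  /-- The defining property of depth-first search trees: every edge going forward
  in preorder goes to a descendant. -/
  dfs_edge : ∀ u v, G u v → pre u < pre v → ∃ n, parent^[n] v = u

/-- `u` is an ancestor of `v` in the tree `T` (every vertex is an ancestor of itself). -/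
def DFSTree.Anc {G : V → V → Prop} {s : V} (T : DFSTree G s) (u v : V) : Prop :=
  ∃ n, T.parent^[n] v = u

/-- `x ∈ loop(u)` with respect to the tree-ancestor relation `tanc`: `x` is a descendant
of `u` and there is a walk from `x` to `u` using only descendants of `u`. -/
def InLoop (G : V → V → Prop) (tanc : V → V → Prop) (u x : V) : Prop :=
  tanc u x ∧ ∃ p, IsWalk G x u p ∧ ∀ y ∈ p, tanc u y

/-- `hp` is the parent function of the loop nesting tree of `G_s` with respect to the
DFS-tree ancestor relation `tanc`: `hp x` is the nearest proper ancestor `u` of `x`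
in the DFS tree with `x ∈ loop(u)`. -/
def IsLoopParent (G : V → V → Prop) (s : V) (tanc : V → V → Prop) (hp : V → V) : Prop :=
  hp s = s ∧ ∀ x, x ≠ s →
    (tanc (hp x) x ∧ hp x ≠ x ∧ InLoop G tanc (hp x) x ∧
      ∀ u, tanc u x → u ≠ x → InLoop G tanc u x → tanc u (hp x))

/-- `u` is an ancestor of `v` in the loop nesting tree with parent function `hp`. -/
def HAnc (hp : V → V) (u v : V) : Prop := ∃ n, hp^[n] v = u

/-- `w` is the nearest common ancestor of `x` and `y` in the loop nesting tree
with parent function `hp`. -/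
def HNca (hp : V → V) (x y w : V) : Prop :=
  HAnc hp w x ∧ HAnc hp w y ∧ ∀ z, HAnc hp z x → HAnc hp z y → HAnc hp z w

/-- `u` is a nontrivial dominator of `G_s`: `u ≠ s` and `u` is not a leaf of the
dominator tree (it properly dominates some vertex). -/
def NontrivialDom (G : V → V → Prop) (s u : V) : Prop :=
  u ≠ s ∧ ∃ w, w ≠ u ∧ Dom G s u w

/-- `a` and `b` are siblings in the dominator tree of `G_s`. -/
def SiblingInD (G : V → V → Prop) (s a b : V) : Prop :=
  a ≠ b ∧ ∃ w, Idom G s w a ∧ Idom G s w b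

/-- Given the bridge-decomposition root function `r` and loop-nesting parent `hp`,
`z` is a boundary vertex. -/
def Boundary (s : V) (r hp : V → V) (z : V) : Prop := z = s ∨ r (hp z) ≠ r z

/-- `z` is the nearest boundary ancestor of `x` in the loop nesting tree. -/
def IsNearestBoundary (s : V) (r hp : V → V) (x z : V) : Prop :=
  HAnc hp z x ∧ Boundary s r hp z ∧
    ∀ z', HAnc hp z' x → Boundary s r hp z' → HAnc hp z' z

/-- `x` and `y` are 2-edge-connected: no single edge deletion leaves them in
different strongly connected components. -/
def TwoEdgeConnected (G : V → V → Prop) (x y : V) : Prop :=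
  ∀ a b, G a b → SConn (DelEdge G a b) x y

/-!
Since `s ≠ u`, a vertex `w` is not dominated by `u` in `G_s` exactly when `G \ u` has a walk
from `s` to `w`, and not dominated by `u` in `G_s^R` exactly when `G \ u` has a walk from `w`
to `s`. Hence `V \ (D(u) ∪ D^R(u))` is the strongly connected component of `s` in `G \ u`.
-/

section Reachability

variable {G : V → V → Prop} {a b c : V}

theorem reach_iff_reflTransGen : Reach G a b ↔ Relation.ReflTransGen G a b := by
  constructor
  · rintro ⟨p, hchain, hhead, hlast⟩
    obtain ⟨t, rfl⟩ : ∃ t, p = a :: t := List.head?_eq_some_iff.1 hhead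
    exact List.relationReflTransGen_of_exists_isChain_cons t hchain
      (by simpa [List.getLast?_eq_some_getLast] using hlast)
  · intro h
    obtain ⟨t, hchain, hlast⟩ := List.exists_isChain_cons_of_relationReflTransGen h
    exact ⟨a :: t, hchain, rfl, by simp [List.getLast?_eq_some_getLast, hlast]⟩

theorem Reach.refl (G : V → V → Prop) (a : V) : Reach G a a :=
  reach_iff_reflTransGen.2 .refl

theorem Reach.trans (hab : Reach G a b) (hbc : Reach G b c) : Reach G a c :=
  reach_iff_reflTransGen.2 ((reach_iff_reflTransGen.1 hab).trans (reach_iff_reflTransGen.1 hbc))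

theorem reach_rev_iff : Reach (Rev G) a b ↔ Reach G b a := by
  rw [reach_iff_reflTransGen, reach_iff_reflTransGen]
  exact Relation.reflTransGen_swap

theorem SConn.symm (h : SConn G a b) : SConn G b a := And.symm h

theorem SConn.trans (hab : SConn G a b) (hbc : SConn G b c) : SConn G a c :=
  ⟨hab.1.trans hbc.1, hbc.2.trans hab.2⟩

theorem isSCC_setOf_sConn (G : V → V → Prop) (s : V) : IsSCC G {x | SConn G s x} :=
  ⟨⟨s, Reach.refl G s, Reach.refl G s⟩, fun _ hx _ hy => hx.symm.trans hy,
    fun _ hx _ hxy => hx.trans hxy⟩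

end Reachability

section Dominators

variable {G : V → V → Prop} {s u x : V}

theorem delVertex_rev (G : V → V → Prop) (u : V) : DelVertex (Rev G) u = Rev (DelVertex G u) := by
  funext x y
  exact propext ⟨fun ⟨h, hx, hy⟩ => ⟨h, hy, hx⟩, fun ⟨h, hy, hx⟩ => ⟨h, hx, hy⟩⟩

theorem not_dom_iff_reach_delVertex (hs : s ≠ u) :
    ¬ Dom G s u x ↔ Reach (DelVertex G u) s x := by
  simp only [Dom, not_forall, exists_prop]
  constructor
  · rintro ⟨p, ⟨hchain, hhead, hlast⟩, hu⟩
    refine ⟨p, hchain.imp_of_mem_imp fun a b ha hb hab => ?_, hhead, hlast⟩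
    exact ⟨hab, ne_of_mem_of_not_mem ha hu, ne_of_mem_of_not_mem hb hu⟩
  · rintro ⟨p, hchain, hhead, hlast⟩
    refine ⟨p, ⟨hchain.imp fun _ _ h => h.1, hhead, hlast⟩, fun hu => ?_⟩
    -- every vertex of a walk in `G \ u` is the start `s ≠ u` or the head of an edge of `G \ u`
    refine hchain.induction (· ≠ u) p (fun _ _ h _ => h.2.2) (fun hne => ?_) u hu rfl
    rwa [(List.head_eq_iff_head?_eq_some hne).2 hhead]

theorem not_dom_rev_iff_reach_delVertex (hs : s ≠ u) :
    ¬ Dom (Rev G) s u x ↔ Reach (DelVertex G u) x s := by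
  rw [not_dom_iff_reach_delVertex hs, delVertex_rev, reach_rev_iff]

end Dominators

theorem stmt16_general (G : V → V → Prop) (s u : V)
    (hnd : NontrivialDom G s u) :
    IsSCC (DelVertex G u) {w | ¬ Dom G s u w ∧ ¬ Dom (Rev G) s u w} := by
  have hs : s ≠ u := hnd.1.symm
  have hC : {w | ¬ Dom G s u w ∧ ¬ Dom (Rev G) s u w} = {w | SConn (DelVertex G u) s w} :=
    Set.ext fun _ =>
      and_congr (not_dom_iff_reach_delVertex hs) (not_dom_rev_iff_reach_delVertex hs)
  rw [hC]
  exact isSCC_setOf_sConn _ s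

/-- If `u` is a strong articulation point that is a common nontrivial dominator of
`G_s` and `G_s^R`, then `V \ (D(u) ∪ D^R(u))` is a strongly connected component of
`G \ u`. -/
theorem stmt16 (G : V → V → Prop) (hG : StronglyConnected G) (s u : V)
    (hsap : IsStrongArticulationPoint G u)
    (hnd : NontrivialDom G s u) (hndR : NontrivialDom (Rev G) s u) :
    IsSCC (DelVertex G u) {w | ¬ Dom G s u w ∧ ¬ Dom (Rev G) s u w} :=
  stmt16_general G s u hnd

end StrongConn
end

section
/- Let G be a strongly connected digraph with start vertex s and loop nesting tree H of G_s. Then s is a strong articulation point of G if and only if s has at least two children in H. -/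
namespace StrongConn

variable {V : Type*}

/-!
Reachability in `G - s` can be read off the loop nesting tree. A vertex `v ≠ s` climbs its
chain of loop-nesting ancestors up to the child `c` of `s` above it, every step being a walk
inside the DFS subtree of a vertex other than `s`, and `c` reaches `v` back down the tree
path; so if `s` has a single child, `G - s` is still strongly connected. Conversely, let two
children `x ≠ y` of `s` be strongly connected in `G - s`, and let `m` be the vertex of least
preorder number in their strong component. By the DFS path property the whole component lies
in the subtree of `m`, so `x` and `y` both belong to `loop(m)`; as their loop parent is `s`,
this forces `x = m = y`.
-/

open Relation

def Induce (G : V → V → Prop) (P : V → Prop) : V → V → Prop :=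
  fun a b => G a b ∧ P a ∧ P b

section Walks

variable {G : V → V → Prop} {u v : V}

theorem reach_iff_reflTransGen_s17 : Reach G u v ↔ ReflTransGen G u v := by
  constructor
  · rintro ⟨p, hchain, hhead, hlast⟩
    have hne : p ≠ [] := by rintro rfl; simp at hhead
    have := List.relationReflTransGen_of_exists_isChain p hchain hne
    rwa [(List.head_eq_iff_head?_eq_some hne).mpr hhead,
      List.getLast_of_mem_getLast? hlast] at this
  · intro h
    obtain ⟨p, hne, hchain, hhead, hlast⟩ := List.exists_isChain_ne_nil_of_relationReflTransGen h
    exact ⟨p, hchain, by rw [List.head?_eq_head hne, hhead],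
      by rw [List.getLast?_eq_getLast hne, hlast]⟩

theorem sConn_iff_reflTransGen : SConn G u v ↔ ReflTransGen G u v ∧ ReflTransGen G v u :=
  and_congr reach_iff_reflTransGen_s17 reach_iff_reflTransGen_s17

theorem exists_isWalk_forall_iff {P : V → Prop} :
    (∃ p, IsWalk G u v p ∧ ∀ y ∈ p, P y) ↔ P u ∧ ReflTransGen (Induce G P) u v := by
  constructor
  · rintro ⟨p, ⟨hchain, hhead, hlast⟩, hP⟩
    refine ⟨hP u (List.mem_of_mem_head? hhead), reach_iff_reflTransGen_s17.mp ⟨p, ?_, hhead, hlast⟩⟩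
    exact hchain.imp_of_mem_imp fun a b ha hb hab => ⟨hab, hP a ha, hP b hb⟩
  · rintro ⟨hu, h⟩
    obtain ⟨p, hchain, hhead, hlast⟩ := reach_iff_reflTransGen_s17.mpr h
    refine ⟨p, ⟨hchain.imp fun _ _ hab => hab.1, hhead, hlast⟩, ?_⟩
    refine List.IsChain.induction P p hchain (fun _ _ hab _ => hab.2.2) fun hne => ?_
    rwa [(List.head_eq_iff_head?_eq_some hne).mpr hhead]

theorem inLoop_iff {tanc : V → V → Prop} :
    InLoop G tanc v u ↔ tanc v u ∧ ReflTransGen (Induce G (tanc v)) u v := by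
  rw [InLoop, exists_isWalk_forall_iff]
  tauto

end Walks

theorem reflTransGen_induce_component {R : V → V → Prop} {x a b : V} (hab : ReflTransGen R a b)
    (hbx : ReflTransGen R b x) (hxa : ReflTransGen R x a) :
    ReflTransGen (Induce R fun z => ReflTransGen R x z ∧ ReflTransGen R z x) a b := by
  induction hab with
  | refl => exact .refl
  | @tail c b hac hcb ih =>
    have hcx : ReflTransGen R c x := hbx.head hcb
    have hxc : ReflTransGen R x c := hxa.trans hac
    exact (ih hcx).tail ⟨hcb, ⟨hxc, hcx⟩, ⟨hxc.tail hcb, hbx⟩⟩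

theorem ne_of_reflTransGen_delVertex {G : V → V → Prop} {s a b : V}
    (h : ReflTransGen (DelVertex G s) a b) (ha : a ≠ s) : b ≠ s := by
  rcases h.cases_tail with rfl | ⟨c, -, -, -, hb⟩
  exacts [ha, hb]

namespace DFSTree

variable {G : V → V → Prop} {s : V} (T : DFSTree G s)

theorem anc_refl (v : V) : T.Anc v v := ⟨0, rfl⟩

theorem anc_trans {u v w : V} (huv : T.Anc u v) (hvw : T.Anc v w) : T.Anc u w := by
  obtain ⟨n, rfl⟩ := huv
  obtain ⟨k, rfl⟩ := hvw
  exact ⟨n + k, Function.iterate_add_apply ..⟩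

theorem iterate_parent_root (n : ℕ) : T.parent^[n] s = s :=
  Function.iterate_fixed T.parent_root n

theorem eq_root_of_anc_root {u : V} (h : T.Anc u s) : u = s := by
  obtain ⟨n, rfl⟩ := h
  exact T.iterate_parent_root n

theorem ne_root_of_anc {u v : V} (h : T.Anc u v) (hu : u ≠ s) : v ≠ s := by
  rintro rfl
  exact hu (T.eq_root_of_anc_root h)

theorem pre_parent_le (v : V) : T.pre (T.parent v) ≤ T.pre v := by
  by_cases hv : v = s
  · rw [hv, T.parent_root]
  · exact (T.pre_parent v hv).le

theorem pre_le_of_anc {u v : V} (h : T.Anc u v) : T.pre u ≤ T.pre v := by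
  obtain ⟨n, rfl⟩ := h
  induction n with
  | zero => rfl
  | succ n ih => exact (Function.iterate_succ_apply' T.parent n v ▸ T.pre_parent_le _).trans ih

theorem pre_lt_of_anc {u v : V} (h : T.Anc u v) (hne : u ≠ v) : T.pre u < T.pre v :=
  (T.pre_le_of_anc h).lt_of_ne fun he => hne (T.pre_inj he)

theorem reflTransGen_of_anc {u v : V} (h : T.Anc u v) :
    ReflTransGen (Induce G (T.Anc u)) u v := by
  obtain ⟨n, rfl⟩ := h
  induction n generalizing v with
  | zero => exact .refl
  | succ n ih =>
    by_cases hv : v = s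
    · subst hv
      rw [T.iterate_parent_root]
    · rw [Function.iterate_succ_apply]
      exact ih.tail ⟨T.parent_edge v hv, ⟨n, rfl⟩, ⟨n + 1, rfl⟩⟩

theorem reflTransGen_delVertex_of_subtree {u a b : V} (hu : u ≠ s)
    (h : ReflTransGen (Induce G (T.Anc u)) a b) : ReflTransGen (DelVertex G s) a b :=
  ReflTransGen.mono (fun _ _ ⟨hab, ha, hb⟩ =>
    ⟨hab, T.ne_root_of_anc ha hu, T.ne_root_of_anc hb hu⟩) _ _ h

/-- The path property of depth-first search; edges going backwards in preorder are handled by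
the `interval` field. -/
theorem anc_of_reflTransGen {m a b : V}
    (h : ReflTransGen (Induce G fun y => T.pre m ≤ T.pre y) a b) (ha : T.Anc m a) :
    T.Anc m b := by
  induction h with
  | refl => exact ha
  | @tail c b _ hcb ih =>
    obtain ⟨hedge, -, hmb⟩ := hcb
    rcases lt_trichotomy (T.pre c) (T.pre b) with hlt | heq | hgt
    · exact T.anc_trans ih (T.dfs_edge c b hedge hlt)
    · exact T.pre_inj heq ▸ ih
    · exact T.interval m b c ih hmb hgt.le

end DFSTree

namespace IsLoopParent

variable {G : V → V → Prop} {s : V} {T : DFSTree G s} {hp : V → V}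

theorem exists_child_reflTransGen (hlp : IsLoopParent G s T.Anc hp) {v : V} (hv : v ≠ s) :
    ∃ c, c ≠ s ∧ hp c = s ∧ T.Anc c v ∧ ReflTransGen (DelVertex G s) v c := by
  induction hn : T.pre v using Nat.strong_induction_on generalizing v with
  | _ n ih =>
    obtain ⟨hanc, hne, hloop, -⟩ := hlp.2 v hv
    by_cases hpv : hp v = s
    · exact ⟨v, hv, hpv, T.anc_refl v, .refl⟩
    · obtain ⟨c, hcs, hpc, hcanc, hreach⟩ := ih _ (hn ▸ T.pre_lt_of_anc hanc hne) hpv rfl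
      have hvp := T.reflTransGen_delVertex_of_subtree hpv (inLoop_iff.mp hloop).2
      exact ⟨c, hcs, hpc, T.anc_trans hcanc hanc, hvp.trans hreach⟩

theorem eq_of_inLoop (hlp : IsLoopParent G s T.Anc hp) {x m : V} (hx : x ≠ s)
    (hpx : hp x = s) (hm : m ≠ s) (hloop : InLoop G T.Anc m x) : m = x := by
  by_contra hne
  have hanc : T.Anc m (hp x) := (hlp.2 x hx).2.2.2 m hloop.1 hne hloop
  exact hm (T.eq_root_of_anc_root (hpx ▸ hanc))

theorem eq_of_sConn_delVertex (hlp : IsLoopParent G s T.Anc hp) {x y : V} (hx : x ≠ s)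
    (hy : y ≠ s) (hpx : hp x = s) (hpy : hp y = s) (h : SConn (DelVertex G s) x y) : x = y := by
  set D := DelVertex G s
  set C : Set V := {z | ReflTransGen D x z ∧ ReflTransGen D z x}
  obtain ⟨hxy, hyx⟩ := sConn_iff_reflTransGen.mp h
  obtain ⟨m, hmC, hmin⟩ := (measure T.pre).wf.has_min C ⟨x, .refl, .refl⟩
  have hms : m ≠ s := ne_of_reflTransGen_delVertex hmC.1 hx
  have hwithin : ∀ a ∈ C, ∀ b ∈ C, ReflTransGen (Induce D (· ∈ C)) a b :=
    fun a ha b hb => reflTransGen_induce_component (ha.2.trans hb.1) hb.2 ha.1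
  have hbelow : ∀ z ∈ C, T.Anc m z := fun z hz =>
    T.anc_of_reflTransGen (ReflTransGen.mono (fun a b ⟨hab, ha, hb⟩ =>
      ⟨hab.1, not_lt.mp (hmin a ha), not_lt.mp (hmin b hb)⟩) _ _ (hwithin m hmC z hz))
      (T.anc_refl m)
  have hloop : ∀ z ∈ C, InLoop G T.Anc m z := fun z hz =>
    inLoop_iff.mpr ⟨hbelow z hz, ReflTransGen.mono (fun a b ⟨hab, ha, hb⟩ =>
      ⟨hab.1, hbelow a ha, hbelow b hb⟩) _ _ (hwithin z hz m hmC)⟩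
  exact (hlp.eq_of_inLoop hx hpx hms (hloop x ⟨.refl, .refl⟩)).symm.trans
    (hlp.eq_of_inLoop hy hpy hms (hloop y ⟨hxy, hyx⟩))

end IsLoopParent

/-- `s` is a strong articulation point of `G` if and only if `s` has at least two
children in the loop nesting tree `H` of `G_s`. -/
theorem stmt17 (G : V → V → Prop) (hG : StronglyConnected G) (s : V)
    (T : DFSTree G s) (hp : V → V) (hlp : IsLoopParent G s T.Anc hp) :
    IsStrongArticulationPoint G s ↔
      ∃ x y, x ≠ y ∧ x ≠ s ∧ y ≠ s ∧ hp x = s ∧ hp y = s := by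
  constructor
  · rintro ⟨a, b, ha, hb, -, hab⟩
    obtain ⟨c, hcs, hpc, hca, hac⟩ := hlp.exists_child_reflTransGen ha
    obtain ⟨d, hds, hpd, hdb, hbd⟩ := hlp.exists_child_reflTransGen hb
    refine ⟨c, d, fun hcd => hab ?_, hcs, hds, hpc, hpd⟩
    subst hcd
    exact sConn_iff_reflTransGen.mpr
      ⟨hac.trans (T.reflTransGen_delVertex_of_subtree hcs (T.reflTransGen_of_anc hdb)),
        hbd.trans (T.reflTransGen_delVertex_of_subtree hcs (T.reflTransGen_of_anc hca))⟩
  · rintro ⟨x, y, hxy, hx, hy, hpx, hpy⟩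
    exact ⟨x, y, hx, hy, ⟨hG x y, hG y x⟩,
      fun h => hxy (hlp.eq_of_sConn_delVertex hx hy hpx hpy h)⟩

end StrongConn
end
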